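/- Let (c_t)_{t∈ℕ} be nonnegative reals with t·c_t → L > 0 as t → ∞, and for β > 0 set T(β) = inf{t ∈ ℕ : c_t ≤ β}. Then limsup_{β→0⁺} β·T(β) ≤ L, i.e., limsup_{β→0⁺} T(β)/(L/β) ≤ 1. -/

import Mathlib

/-!
If `t * c t ≤ M` for all large `t`, then the time `t = ⌈M / β⌉₊` satisfies `c t ≤ M / t ≤ β`,
so the first passage time below `β` is at most `⌈M / β⌉₊` and `β * T(β) < M + β`.
Since `M > L` is arbitrary and `β → 0`, the limsup is at most `L`.
-/

open Filter Topology

noncomputable def firstPassageTime (c : ℕ → ℝ) (β : ℝ) : ℕ := sInf {t : ℕ | c t ≤ β}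

lemma firstPassageTime_le {c : ℕ → ℝ} {β : ℝ} {t : ℕ} (h : c t ≤ β) :
    firstPassageTime c β ≤ t :=
  Nat.sInf_le h

lemma mul_firstPassageTime_lt {c : ℕ → ℝ} {β M : ℝ} (hβ : 0 < β) (hM : 0 < M)
    (h : (⌈M / β⌉₊ : ℝ) * c ⌈M / β⌉₊ ≤ M) : β * firstPassageTime c β < M + β := by
  set t := ⌈M / β⌉₊
  have hMt : M ≤ t * β := (div_le_iff₀ hβ).1 (Nat.le_ceil _)
  have ht : 0 < (t : ℝ) := pos_of_mul_pos_left (hM.trans_le hMt) hβ.le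
  have hct : c t ≤ β := le_of_mul_le_mul_left (h.trans hMt) ht
  calc β * firstPassageTime c β ≤ β * t := by
        gcongr; exact_mod_cast firstPassageTime_le hct
    _ < β * (M / β + 1) := by gcongr; exact Nat.ceil_lt_add_one (by positivity)
    _ = M + β := by field_simp

lemma tendsto_ceil_div_nhdsGT_zero {M : ℝ} (hM : 0 < M) :
    Tendsto (fun β : ℝ => ⌈M / β⌉₊) (𝓝[>] 0) atTop :=
  tendsto_nat_ceil_atTop.comp (tendsto_inv_nhdsGT_zero.const_mul_atTop hM)

lemma eventually_mul_firstPassageTime_lt {c : ℕ → ℝ} {L M : ℝ}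
    (hlim : Tendsto (fun t : ℕ => (t : ℝ) * c t) atTop (𝓝 L)) (hLM : L < M) (hM : 0 < M) :
    ∀ᶠ β in 𝓝[>] 0, β * firstPassageTime c β < M + β := by
  filter_upwards [self_mem_nhdsWithin,
    (tendsto_ceil_div_nhdsGT_zero hM).eventually (hlim.eventually (eventually_le_nhds hLM))]
    with β hβ h using mul_firstPassageTime_lt hβ hM h

theorem first_passage_limsup_le_general (c : ℕ → ℝ) (L : ℝ)
    (hL : 0 < L) (hlim : Tendsto (fun t : ℕ => (t : ℝ) * c t) atTop (nhds L)) :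
    limsup (fun β : ℝ => β * ((sInf {t : ℕ | c t ≤ β} : ℕ) : ℝ))
      (nhdsWithin 0 (Set.Ioi 0)) ≤ L := by
  change limsup (fun β : ℝ => β * (firstPassageTime c β : ℝ)) (𝓝[>] 0) ≤ L
  have hcobdd : IsCoboundedUnder (· ≤ ·) (𝓝[>] (0 : ℝ))
      (fun β : ℝ => β * (firstPassageTime c β : ℝ)) :=
    isCoboundedUnder_le_of_eventually_le _ (eventually_nhdsWithin_of_forall
      fun β (hβ : 0 < β) => mul_nonneg hβ.le (Nat.cast_nonneg _))
  refine le_of_forall_gt_imp_ge_of_dense fun y hy => limsup_le_of_le hcobdd ?_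
  filter_upwards [eventually_mul_firstPassageTime_lt (M := (L + y) / 2) hlim (by linarith)
      (by linarith), Ioo_mem_nhdsGT (by linarith : (0 : ℝ) < (y - L) / 2)] with β hT hβ
  linarith [hβ.2]

/-- If `t·c_t → L > 0` and `T(β) = inf{t : c_t ≤ β}`, then
`limsup_{β→0⁺} β·T(β) ≤ L`. -/
theorem first_passage_limsup_le (c : ℕ → ℝ) (hc : ∀ t, 0 ≤ c t) (L : ℝ)
    (hL : 0 < L) (hlim : Tendsto (fun t : ℕ => (t : ℝ) * c t) atTop (nhds L)) :
    limsup (fun β : ℝ => β * ((sInf {t : ℕ | c t ≤ β} : ℕ) : ℝ))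
      (nhdsWithin 0 (Set.Ioi 0)) ≤ L :=
  first_passage_limsup_le_general c L hL hlim
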